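/- arXiv:math/0112248 — 3 statements merged into one kernel-verified Lean document; each statement's English description precedes it below -/
import Mathlib

section
/- Under the assumption that there exists an algebra homomorphism φ̃ : A >⋊ H → A acting as the identity on A, the map ζ̃(g) = g₍₁₎ φ̃(S g₍₂₎) takes values in the commutant C̃ of A inside A >⋊ H; that is, ζ̃(g) commutes with every element of A. -/
/-!
Put `ψ = φ̃ ∘ ι_H`, an algebra map `H → A`. In the convolution algebra of linear maps `H → A`,
`ψ ∘ S` is the inverse of `ψ`, and applying `φ̃` to the straightening relation
`a g = g₍₁₎ (a ◁ g₍₂₎)` gives `ψ ⋆ (a ◁ ·) = a ψ`. Hence `(a ◁ ·) = (ψ ∘ S) ⋆ a ψ`, and so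
`(a ◁ ·) ⋆ (ψ ∘ S) = (ψ ∘ S) ⋆ a ε = (ψ ∘ S) a`: the scalar `a` has moved across.
Since `ζ̃ = ι_H ⋆ (ι_A ∘ ψ ∘ S)`, straightening `a ζ̃` gives `ι_H ⋆ ι_A ∘ ((a ◁ ·) ⋆ (ψ ∘ S))`,
which is `ζ̃ a`.
-/

open TensorProduct

/-- `A` is a unital right `H`-module algebra via the bilinear action `act` (written `a ◁ g`):
`a ◁ 1 = a`, `a ◁ (g g') = (a ◁ g) ◁ g'`, `(a a') ◁ g = (a ◁ g₍₁₎)(a' ◁ g₍₂₎)`,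
and `1 ◁ g = ε(g) 1`. -/
structure RightModuleAlgebra (k : Type) [Field k] (H A : Type) [Ring H] [Ring A]
    [HopfAlgebra k H] [Algebra k A] (act : A →ₗ[k] H →ₗ[k] A) : Prop where
  act_one : ∀ a : A, act a 1 = a
  act_mul : ∀ (a : A) (g g' : H), act a (g * g') = act (act a g) g'
  mul_act : ∀ (a a' : A) (g : H), act (a * a') g =
    LinearMap.mul' k A (TensorProduct.map (act a) (act a') (Coalgebra.comul g))
  one_act : ∀ g : H, act (1 : A) g = (Coalgebra.counit (R := k) g) • (1 : A)

/-- The cross-product (smash product) algebra `A >⋊ H`, realized as an ambient algebra `B`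
containing `H` and `A` via `ιH`, `ιA`, with the straightening relation
`a g = g₍₁₎ (a ◁ g₍₂₎)` and with `g ⊗ a ↦ ιH g * ιA a` a linear bijection `H ⊗ A ≃ B`. -/
structure SmashProduct (k : Type) [Field k] (H A B : Type) [Ring H] [Ring A] [Ring B]
    [HopfAlgebra k H] [Algebra k A] [Algebra k B]
    (act : A →ₗ[k] H →ₗ[k] A) : Type where
  ιH : H →ₐ[k] B
  ιA : A →ₐ[k] B
  straighten : ∀ (a : A) (g : H), ιA a * ιH g =
    LinearMap.mul' k B (TensorProduct.map ιH.toLinearMap (ιA.toLinearMap ∘ₗ act a)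
      (Coalgebra.comul g))
  mulMap_bij : Function.Bijective fun x : H ⊗[k] A =>
    LinearMap.mul' k B (TensorProduct.map ιH.toLinearMap ιA.toLinearMap x)

variable {k : Type} [Field k] {H A B : Type} [Ring H] [Ring A] [Ring B]
  [HopfAlgebra k H] [Algebra k A] [Algebra k B] {act : A →ₗ[k] H →ₗ[k] A}

/-- The decoupling map `ζ̃(g) = g₍₁₎ φ̃(S g₍₂₎)`, valued in `A >⋊ H`. -/
noncomputable def zeta (S : SmashProduct k H A B act) (φ : B →ₐ[k] A) : H →ₗ[k] B :=
  (LinearMap.mul' k B) ∘ₗ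
    (TensorProduct.map S.ιH.toLinearMap
      (S.ιA.toLinearMap ∘ₗ φ.toLinearMap ∘ₗ S.ιH.toLinearMap ∘ₗ
        (HopfAlgebra.antipode (R := k) (A := H)))) ∘ₗ Coalgebra.comul

open Coalgebra HopfAlgebra LinearMap WithConv

section Convolution

variable {R C L : Type*} [CommSemiring R] [AddCommMonoid C] [Module R C] [Semiring L]
  [Algebra R L]

lemma LinearMap.mulLeft_comp_convMul [CoalgebraStruct R C] (a : L)
    (f g : WithConv (C →ₗ[R] L)) :
    toConv (mulLeft R a ∘ₗ f.ofConv) * g = toConv (mulLeft R a ∘ₗ (f * g).ofConv) := by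
  ext c
  simp only [convMul_apply, comp_apply, mulLeft_apply]
  induction comul (R := R) c using TensorProduct.induction_on with
  | zero => simp
  | tmul x y => simp [mul_assoc]
  | add x y hx hy => simp_all [mul_add]

lemma LinearMap.convMul_mulRight_comp [CoalgebraStruct R C] (a : L)
    (f g : WithConv (C →ₗ[R] L)) :
    f * toConv (mulRight R a ∘ₗ g.ofConv) = toConv (mulRight R a ∘ₗ (f * g).ofConv) := by
  ext c
  simp only [convMul_apply, comp_apply, mulRight_apply]
  induction comul (R := R) c using TensorProduct.induction_on with
  | zero => simp
  | tmul x y => simp [mul_assoc]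
  | add x y hx hy => simp_all [add_mul]

lemma LinearMap.mulLeft_comp_convOne [Coalgebra R C] (a : L) :
    mulLeft R a ∘ₗ (1 : WithConv (C →ₗ[R] L)).ofConv =
      mulRight R a ∘ₗ (1 : WithConv (C →ₗ[R] L)).ofConv := by
  ext c
  simp [Algebra.commutes]

end Convolution

section ConvolutionInverse

variable {R H L : Type*} [CommSemiring R] [Semiring H] [HopfAlgebra R H] [Semiring L]
  [Algebra R L]

lemma AlgHom.comp_antipode_convMul_self (u : H →ₐ[R] L) :
    toConv (u.toLinearMap ∘ₗ antipode R) * toConv u.toLinearMap = 1 :=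
  calc _ = toConv (u.toLinearMap ∘ₗ
        (toConv (antipode R) * toConv LinearMap.id : WithConv (H →ₗ[R] H)).ofConv) := by
        rw [algHom_comp_convMul_distrib]; rfl
    _ = 1 := by
        rw [antipode_mul_id]; ext; simp

lemma AlgHom.self_convMul_comp_antipode (u : H →ₐ[R] L) :
    toConv u.toLinearMap * toConv (u.toLinearMap ∘ₗ antipode R) = 1 :=
  calc _ = toConv (u.toLinearMap ∘ₗ
        (toConv LinearMap.id * toConv (antipode R) : WithConv (H →ₗ[R] H)).ofConv) := by
        rw [algHom_comp_convMul_distrib]; rfl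
    _ = 1 := by
        rw [id_mul_antipode]; ext; simp

lemma AlgHom.convMul_comp_antipode_eq_mulRight {u : H →ₐ[R] L} {f : H →ₗ[R] L} {a : L}
    (h : toConv u.toLinearMap * toConv f = toConv (mulLeft R a ∘ₗ u.toLinearMap)) :
    toConv f * toConv (u.toLinearMap ∘ₗ antipode R) =
      toConv (mulRight R a ∘ₗ u.toLinearMap ∘ₗ antipode R) := by
  set uS := toConv (u.toLinearMap ∘ₗ antipode R)
  have hf : toConv f = uS * toConv (mulLeft R a ∘ₗ u.toLinearMap) := by
    rw [← h, ← mul_assoc, u.comp_antipode_convMul_self, one_mul]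
  calc toConv f * uS = uS * toConv (mulLeft R a ∘ₗ (toConv u.toLinearMap * uS).ofConv) := by
        rw [hf, mul_assoc, mulLeft_comp_convMul]
    _ = uS * toConv (mulRight R a ∘ₗ (1 : WithConv (H →ₗ[R] L)).ofConv) := by
        rw [u.self_convMul_comp_antipode, mulLeft_comp_convOne]
    _ = toConv (mulRight R a ∘ₗ u.toLinearMap ∘ₗ antipode R) := by
        rw [convMul_mulRight_comp, mul_one]

end ConvolutionInverse

namespace SmashProduct

variable (S : SmashProduct k H A B act)

lemma straighten_conv (a : A) :
    toConv (mulLeft k (S.ιA a) ∘ₗ S.ιH.toLinearMap) =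
      toConv S.ιH.toLinearMap * toConv (S.ιA.toLinearMap ∘ₗ act a) := by
  ext g
  exact S.straighten a g

lemma comp_ιH_convMul_act {φ : B →ₐ[k] A} (hφ : ∀ a : A, φ (S.ιA a) = a) (a : A) :
    toConv (φ.comp S.ιH).toLinearMap * toConv (act a) =
      toConv (mulLeft k a ∘ₗ (φ.comp S.ιH).toLinearMap) := by
  have hφA : φ.toLinearMap ∘ₗ S.ιA.toLinearMap ∘ₗ act a = act a := by
    ext; simp [hφ]
  have h := congrArg (φ.toLinearMap ∘ₗ ofConv ·) (S.straighten_conv a)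
  rw [algHom_comp_convMul_distrib, hφA] at h
  ext g
  simpa [hφ] using (LinearMap.congr_fun h g).symm

lemma mulLeft_comp_zeta {φ : B →ₐ[k] A} (hφ : ∀ a : A, φ (S.ιA a) = a) (a : A) :
    mulLeft k (S.ιA a) ∘ₗ zeta S φ = mulRight k (S.ιA a) ∘ₗ zeta S φ := by
  set ψS := (φ.comp S.ιH).toLinearMap ∘ₗ antipode k
  apply toConv_injective
  calc toConv (mulLeft k (S.ιA a) ∘ₗ zeta S φ)
      = toConv (mulLeft k (S.ιA a) ∘ₗ S.ιH.toLinearMap) *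
          toConv (S.ιA.toLinearMap ∘ₗ ψS) :=
        (mulLeft_comp_convMul _ _ _).symm
    _ = toConv S.ιH.toLinearMap *
          toConv (S.ιA.toLinearMap ∘ₗ (toConv (act a) * toConv ψS).ofConv) := by
        rw [straighten_conv, mul_assoc, algHom_comp_convMul_distrib]
    _ = toConv S.ιH.toLinearMap *
          toConv (mulRight k (S.ιA a) ∘ₗ S.ιA.toLinearMap ∘ₗ ψS) := by
        rw [AlgHom.convMul_comp_antipode_eq_mulRight (S.comp_ιH_convMul_act hφ a)]
        congr 2
        ext
        simp [ψS]
    _ = toConv (mulRight k (S.ιA a) ∘ₗ zeta S φ) := convMul_mulRight_comp _ _ _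

end SmashProduct

theorem zeta_mem_commutant_general
    (S : SmashProduct k H A B act) (φ : B →ₐ[k] A)
    (hφ : ∀ a : A, φ (S.ιA a) = a) :
    ∀ (g : H) (a : A), zeta S φ g * S.ιA a = S.ιA a * zeta S φ g :=
  fun g a => (LinearMap.congr_fun (S.mulLeft_comp_zeta hφ a) g).symm

/-- `ζ̃(g)` commutes with every element of `A`, i.e. `ζ̃` takes values in
the commutant of `A` inside `A >⋊ H`. -/
theorem zeta_mem_commutant
    (hMA : RightModuleAlgebra k H A act)
    (S : SmashProduct k H A B act) (φ : B →ₐ[k] A)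
    (hφ : ∀ a : A, φ (S.ιA a) = a) :
    ∀ (g : H) (a : A), zeta S φ g * S.ιA a = S.ιA a * zeta S φ g :=
  zeta_mem_commutant_general S φ hφ
end

section
/- Under the same assumptions, if H_c ⊆ H and A_c ⊆ A are maximal abelian subalgebras, then A_c · ζ̃(H_c) is a maximal abelian subalgebra of A >⋊ H. -/
open TensorProduct

variable {k : Type} [Field k] {H A B : Type} [Ring H] [Ring A] [Ring B]
  [HopfAlgebra k H] [Algebra k A] [Algebra k B] {act : A →ₗ[k] H →ₗ[k] A}

/-- The commutant `C̃ = { c ∈ A >⋊ H : [c,a] = 0 for all a ∈ A }` of `A` in `A >⋊ H`,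
as a `k`-submodule of `A >⋊ H`. -/
def commutant (S : SmashProduct k H A B act) : Submodule k B where
  carrier := {c : B | ∀ a : A, c * S.ιA a = S.ιA a * c}
  add_mem' := by
    intro x y hx hy a
    simp only [add_mul, mul_add, hx a, hy a]
  zero_mem' := by intro a; simp
  smul_mem' := by
    intro c x hx a
    rw [Algebra.smul_mul_assoc, hx a, Algebra.mul_smul_comm]

/-! Since `ζ̃` is multiplicative and `ζ̃(H)` commutes with `A`, `a ⊗ g ↦ a ζ̃(g)` is an algebra map
`A ⊗ H → A >⋊ H`. It is bijective: `a ζ̃(g) = g₍₁₎ φ̃(S g₍₂₎) a` is the multiplication isomorphism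
`H ⊗ A ≅ A >⋊ H` precomposed with the twist `g ⊗ a ↦ g₍₁₎ ⊗ φ̃(S g₍₂₎) a`, whose inverse is the
twist by `φ̃|_H`. So `A >⋊ H ≅ A ⊗ H` carries `A_c · ζ̃(H_c)` to `A_c ⊗ H_c`, and over a field the
centralizer of `A_c ⊗ H_c` in `A ⊗ H` is `C(A_c) ⊗ C(H_c) = A_c ⊗ H_c`. -/

open WithConv Coalgebra

namespace LinearMap

variable {R C A : Type*} [CommSemiring R] [AddCommMonoid C] [Module R C] [Coalgebra R C]
  [Semiring A] [Algebra R A]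

lemma mulLeft_comp_convMul_s9 (x : A) (f g : WithConv (C →ₗ[R] A)) :
    toConv (mulLeft R x ∘ₗ f.ofConv) * g = toConv (mulLeft R x ∘ₗ (f * g).ofConv) := by
  ext c
  simp [(ℛ R c).convMul_apply, mul_assoc]

lemma mulRight_comp_convMul (x : A) (f g : WithConv (C →ₗ[R] A)) :
    toConv (mulRight R x ∘ₗ f.ofConv) * g = f * toConv (mulLeft R x ∘ₗ g.ofConv) := by
  ext c
  simp [(ℛ R c).convMul_apply, mul_assoc]

noncomputable def convTwist (f : WithConv (C →ₗ[R] A)) : Module.End R (C ⊗[R] A) :=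
  lTensor C (mul' R A) ∘ₗ (TensorProduct.assoc R C A A).toLinearMap ∘ₗ
    rTensor A (lTensor C f.ofConv ∘ₗ comul)

lemma convTwist_tmul (f : WithConv (C →ₗ[R] A)) {c : C} {ι : Type*} (𝓡 : Repr R c ι) (a : A) :
    convTwist f (c ⊗ₜ a) = ∑ i ∈ 𝓡.index, 𝓡.left i ⊗ₜ (f (𝓡.right i) * a) := by
  simp [convTwist, ← 𝓡.eq, sum_tmul]

lemma convTwist_one : convTwist (1 : WithConv (C →ₗ[R] A)) = 1 := by
  ext c a
  have h := congr(lTensor C (toSpanSingleton R A a) $(sum_tmul_counit_eq (ℛ R c)))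
  simp only [map_sum, lTensor_tmul, toSpanSingleton_apply, one_smul] at h
  simpa [convTwist_tmul _ (ℛ R c), ← Algebra.smul_def] using h

lemma convTwist_mul (f g : WithConv (C →ₗ[R] A)) :
    convTwist (f * g) = convTwist f * convTwist g := by
  ext c a
  have h := congr(lTensor C (mul' R A ∘ₗ map f.ofConv (mulRight R a ∘ₗ g.ofConv))
    $(sum_tmul_tmul_eq (ℛ R c) (fun i ↦ ℛ R ((ℛ R c).left i)) (fun i ↦ ℛ R ((ℛ R c).right i))))
  simp only [map_sum, lTensor_tmul, comp_apply, map_tmul, mul'_apply, mulRight_apply] at h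
  simp [convTwist_tmul _ (ℛ R c), convTwist_tmul _ (ℛ R ((ℛ R c).left _)),
    (ℛ R ((ℛ R c).right _)).convMul_apply, Finset.sum_mul, tmul_sum, mul_assoc, h]

lemma convTwist_bijective {f : WithConv (C →ₗ[R] A)} (hf : IsUnit f) :
    Function.Bijective (convTwist f) := by
  obtain ⟨u, rfl⟩ := hf
  refine Function.bijective_iff_has_inverse.2 ⟨convTwist ↑u⁻¹, fun x ↦ ?_, fun x ↦ ?_⟩
  · rw [← Module.End.mul_apply, ← convTwist_mul, u.inv_mul, convTwist_one, Module.End.one_apply]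
  · rw [← Module.End.mul_apply, ← convTwist_mul, u.mul_inv, convTwist_one, Module.End.one_apply]

end LinearMap

namespace AlgHom

variable {R H A : Type*} [CommSemiring R] [Semiring H] [HopfAlgebra R H] [Semiring A]
  [Algebra R A]

lemma toConv_mul_toConv_comp_antipode (f : H →ₐ[R] A) :
    toConv f.toLinearMap * toConv (f.toLinearMap ∘ₗ HopfAlgebra.antipode R) = 1 := by
  ext c
  simp [(ℛ R c).convMul_apply, ← map_mul, ← map_sum,
    HopfAlgebra.sum_mul_antipode_eq_algebraMap_counit]

lemma toConv_comp_antipode_mul_toConv (f : H →ₐ[R] A) :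
    toConv (f.toLinearMap ∘ₗ HopfAlgebra.antipode R) * toConv f.toLinearMap = 1 := by
  ext c
  simp [(ℛ R c).convMul_apply, ← map_mul, ← map_sum,
    HopfAlgebra.sum_antipode_mul_eq_algebraMap_counit]

lemma isUnit_toConv (f : H →ₐ[R] A) : IsUnit (toConv f.toLinearMap) :=
  ⟨⟨_, _, f.toConv_mul_toConv_comp_antipode, f.toConv_comp_antipode_mul_toConv⟩, rfl⟩

lemma isUnit_toConv_comp_antipode (f : H →ₐ[R] A) :
    IsUnit (toConv (f.toLinearMap ∘ₗ HopfAlgebra.antipode R)) :=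
  ⟨⟨_, _, f.toConv_comp_antipode_mul_toConv, f.toConv_mul_toConv_comp_antipode⟩, rfl⟩

end AlgHom

namespace Subalgebra

variable {R A : Type*} [CommSemiring R] [Semiring A] [Algebra R A]

lemma centralizer_coe_eq_self_iff (S : Subalgebra R A) :
    centralizer R (S : Set A) = S ↔
      (∀ x ∈ S, ∀ y ∈ S, x * y = y * x) ∧ ∀ x : A, (∀ y ∈ S, x * y = y * x) → x ∈ S := by
  simp only [le_antisymm_iff, SetLike.le_def, mem_centralizer_iff]
  constructor
  · rintro ⟨hle, hge⟩
    exact ⟨fun x hx y hy ↦ hge hy x hx, fun x hx ↦ hle fun y hy ↦ (hx y hy).symm⟩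
  · rintro ⟨hcomm, hmax⟩
    exact ⟨fun x hx ↦ hmax x fun y hy ↦ (hx y hy).symm, fun x hx y hy ↦ hcomm y hy x hx⟩

lemma centralizer_coe_map_algEquiv {B : Type*} [Semiring B] [Algebra R B] (e : A ≃ₐ[R] B)
    (S : Subalgebra R A) :
    centralizer R (S.map (e : A →ₐ[R] B) : Set B) =
      (centralizer R (S : Set A)).map (e : A →ₐ[R] B) := by
  ext b
  obtain ⟨a, rfl⟩ := e.surjective b
  simp [mem_centralizer_iff, ← map_mul, e.injective.eq_iff]

end Subalgebra

namespace Algebra.TensorProduct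

lemma toSubmodule_map_range_map_val {R A B C : Type*} [CommSemiring R] [Semiring A] [Semiring B]
    [Semiring C] [Algebra R A] [Algebra R B] [Algebra R C] (f : A ⊗[R] B →ₐ[R] C)
    (S : Subalgebra R A) (T : Subalgebra R B) :
    Subalgebra.toSubmodule ((map S.val T.val).range.map f) =
      Submodule.span R {c | ∃ a ∈ S, ∃ b ∈ T, c = f (a ⊗ₜ b)} := by
  rw [Subalgebra.map_toSubmodule]
  change Submodule.map _
    (LinearMap.range (_root_.TensorProduct.map S.val.toLinearMap T.val.toLinearMap)) = _
  rw [TensorProduct.range_map_eq_span_tmul, Submodule.map_span]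
  congr 1
  ext c
  simp [eq_comm, and_assoc]

variable {k A B : Type*} [Field k] [Ring A] [Ring B] [Algebra k A] [Algebra k B]

/-- An element centralizing `S ⊗ 1` lies in `C(S) ⊗ B`, and since `C(S) ⊗ B → A ⊗ B` is injective
(flatness), whether it also centralizes `1 ⊗ T` can be decided inside `C(S) ⊗ B`. -/
lemma centralizer_coe_range_map_val (S : Subalgebra k A) (T : Subalgebra k B) :
    Subalgebra.centralizer k ((map S.val T.val).range : Set (A ⊗[k] B)) =
      (map (Subalgebra.centralizer k (S : Set A)).val
        (Subalgebra.centralizer k (T : Set B)).val).range := by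
  set U := Subalgebra.centralizer k (S : Set A)
  set V := Subalgebra.centralizer k (T : Set B)
  have hS : (includeLeft.comp S.val).range = S.map (includeLeft (R := k) (S := k) (B := B)) := by
    rw [AlgHom.range_comp, Subalgebra.range_val]
  have hT : (includeRight.comp T.val).range = T.map (includeRight (A := A)) := by
    rw [AlgHom.range_comp, Subalgebra.range_val]
  rw [map_range, Subalgebra.centralizer_coe_sup, hS, hT]
  apply le_antisymm
  · rintro t ⟨hSt, hTt⟩
    rw [SetLike.mem_coe,
      Subalgebra.centralizer_coe_map_includeLeft_eq_center_tensorProduct] at hSt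
    obtain ⟨s, rfl⟩ := hSt
    have hinj : Function.Injective (map U.val (AlgHom.id k B)) :=
      Module.Flat.rTensor_preserves_injective_linearMap _ Subtype.val_injective
    have hs : s ∈ Subalgebra.centralizer k
        ((T.map (includeRight (A := U)) : Subalgebra k (U ⊗[k] B)) : Set (U ⊗[k] B)) := by
      rw [SetLike.mem_coe, Subalgebra.mem_centralizer_iff] at hTt
      rw [Subalgebra.mem_centralizer_iff]
      rintro _ ⟨y, hy, rfl⟩
      apply hinj
      simpa using hTt _ ⟨y, hy, rfl⟩
    rw [Subalgebra.centralizer_coe_map_includeRight_eq_center_tensorProduct] at hs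
    obtain ⟨s', rfl⟩ := hs
    refine ⟨s', ?_⟩
    change map U.val V.val s' = map U.val (AlgHom.id k B) (map (AlgHom.id k U) V.val s')
    rw [← AlgHom.comp_apply, ← map_comp, AlgHom.comp_id, AlgHom.id_comp]
  · rw [le_inf_iff, Subalgebra.centralizer_coe_map_includeLeft_eq_center_tensorProduct,
      Subalgebra.centralizer_coe_map_includeRight_eq_center_tensorProduct]
    constructor
    · rw [← AlgHom.comp_id U.val, ← AlgHom.id_comp V.val, map_comp]
      exact AlgHom.range_comp_le_range _ _
    · rw [← AlgHom.id_comp U.val, ← AlgHom.comp_id V.val, map_comp]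
      exact AlgHom.range_comp_le_range _ _

end Algebra.TensorProduct

namespace SmashProduct

variable (S : SmashProduct k H A B act) (φ : B →ₐ[k] A)

lemma toConv_ιH_mul_toConv_ιA_comp_act (a : A) :
    toConv S.ιH.toLinearMap * toConv (S.ιA.toLinearMap ∘ₗ act a) =
      toConv (LinearMap.mulLeft k (S.ιA a) ∘ₗ S.ιH.toLinearMap) := by
  ext g
  exact (S.straighten a g).symm

lemma toConv_zeta : toConv (zeta S φ) = toConv S.ιH.toLinearMap *
    toConv ((S.ιA.comp (φ.comp S.ιH)).toLinearMap ∘ₗ HopfAlgebra.antipode k) :=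
  rfl

lemma toConv_zeta_mul_toConv_ιA_comp :
    toConv (zeta S φ) * toConv (S.ιA.comp (φ.comp S.ιH)).toLinearMap =
      toConv S.ιH.toLinearMap := by
  rw [toConv_zeta, mul_assoc, AlgHom.toConv_comp_antipode_mul_toConv, mul_one]

lemma toConv_mulLeft_comp_ιA_comp (hφ : ∀ a : A, φ (S.ιA a) = a) (a : A) :
    toConv (LinearMap.mulLeft k (S.ιA a) ∘ₗ (S.ιA.comp (φ.comp S.ιH)).toLinearMap) =
      toConv (S.ιA.comp (φ.comp S.ιH)).toLinearMap * toConv (S.ιA.toLinearMap ∘ₗ act a) := by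
  have hφ_act : (S.ιA.comp φ).toLinearMap ∘ₗ S.ιA.toLinearMap ∘ₗ act a =
      S.ιA.toLinearMap ∘ₗ act a := by
    ext g; simp [hφ]
  have hmul : LinearMap.mulLeft k (S.ιA a) ∘ₗ (S.ιA.comp (φ.comp S.ιH)).toLinearMap =
      (S.ιA.comp φ).toLinearMap ∘ₗ LinearMap.mulLeft k (S.ιA a) ∘ₗ S.ιH.toLinearMap := by
    ext g; simp [hφ]
  rw [hmul, ← ofConv_toConv (LinearMap.mulLeft k (S.ιA a) ∘ₗ S.ιH.toLinearMap),
    ← toConv_ιH_mul_toConv_ιA_comp_act, LinearMap.algHom_comp_convMul_distrib, toConv_ofConv,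
    hφ_act]
  rfl

/-- Convolved on the right with the invertible `ιA ∘ φ ∘ ιH`, both `ιA a * ζ(-)` and
`ζ(-) * ιA a` become `ιA a * ιH(-)`; for the second this is the straightening relation. -/
lemma commute_ιA_zeta (hφ : ∀ a : A, φ (S.ιA a) = a) (a : A) (g : H) :
    Commute (S.ιA a) (zeta S φ g) := by
  have h : toConv (LinearMap.mulLeft k (S.ιA a) ∘ₗ zeta S φ) =
      toConv (LinearMap.mulRight k (S.ιA a) ∘ₗ zeta S φ) := by
    refine (AlgHom.isUnit_toConv (S.ιA.comp (φ.comp S.ιH))).mul_left_inj.1 ?_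
    rw [LinearMap.mulLeft_comp_convMul_s9, LinearMap.mulRight_comp_convMul,
      toConv_zeta_mul_toConv_ιA_comp, toConv_mulLeft_comp_ιA_comp S φ hφ, ← mul_assoc,
      toConv_zeta_mul_toConv_ιA_comp, toConv_ιH_mul_toConv_ιA_comp_act]
  exact congr($h g)

lemma zeta_eq_sum {g : H} {ι : Type*} (𝓡 : Repr k g ι) :
    zeta S φ g = ∑ i ∈ 𝓡.index,
      S.ιH (𝓡.left i) * S.ιA (φ (S.ιH (HopfAlgebra.antipode k (𝓡.right i)))) := by
  change toConv (zeta S φ) g = _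
  rw [toConv_zeta, 𝓡.convMul_apply]
  rfl

lemma zeta_one : zeta S φ 1 = 1 := by
  simp [zeta, Algebra.TensorProduct.one_def]

lemma zeta_mul (hφ : ∀ a : A, φ (S.ιA a) = a) (g g' : H) :
    zeta S φ (g * g') = zeta S φ g * zeta S φ g' := by
  set ψS : H → B := fun h ↦ S.ιA (φ (S.ιH (HopfAlgebra.antipode k h)))
  calc zeta S φ (g * g')
      = ∑ i ∈ (ℛ k g).index, ∑ j ∈ (ℛ k g').index, S.ιH ((ℛ k g).left i) *
          (S.ιH ((ℛ k g').left j) * ψS ((ℛ k g').right j)) * ψS ((ℛ k g).right i) := by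
        simp [zeta_eq_sum S φ ((ℛ k g).mul (ℛ k g')), Finset.sum_product, ψS,
          HopfAlgebra.antipode_mul_antidistrib, mul_assoc]
    _ = ∑ i ∈ (ℛ k g).index, S.ιH ((ℛ k g).left i) * zeta S φ g' * ψS ((ℛ k g).right i) := by
        simp [zeta_eq_sum S φ (ℛ k g'), ψS, Finset.mul_sum, Finset.sum_mul]
    _ = ∑ i ∈ (ℛ k g).index, S.ιH ((ℛ k g).left i) * ψS ((ℛ k g).right i) * zeta S φ g' := by
        simp only [mul_assoc, (commute_ιA_zeta S φ hφ _ g').eq, ψS]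
    _ = zeta S φ g * zeta S φ g' := by
        rw [zeta_eq_sum S φ (ℛ k g), Finset.sum_mul]

noncomputable def zetaAlgHom (hφ : ∀ a : A, φ (S.ιA a) = a) : H →ₐ[k] B :=
  AlgHom.ofLinearMap (zeta S φ) (zeta_one S φ) (zeta_mul S φ hφ)

lemma bijective_lift_ιA_zetaAlgHom (hφ : ∀ a : A, φ (S.ιA a) = a) :
    Function.Bijective
      (Algebra.TensorProduct.lift S.ιA (zetaAlgHom S φ hφ) (commute_ιA_zeta S φ hφ)) := by
  set u := toConv ((φ.comp S.ιH).toLinearMap ∘ₗ HopfAlgebra.antipode k)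
  have h : ⇑(Algebra.TensorProduct.lift S.ιA (zetaAlgHom S φ hφ) (commute_ιA_zeta S φ hφ)) =
      (fun x ↦ LinearMap.mul' k B (TensorProduct.map S.ιH.toLinearMap S.ιA.toLinearMap x)) ∘
        LinearMap.convTwist u ∘ TensorProduct.comm k A H := by
    ext x
    induction x using TensorProduct.induction_on with
    | zero => simp
    | tmul a g =>
      change S.ιA a * zeta S φ g = _
      rw [(commute_ιA_zeta S φ hφ a g).eq]
      simp [zeta_eq_sum S φ (ℛ k g), LinearMap.convTwist_tmul _ (ℛ k g), u, Finset.sum_mul,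
        mul_assoc]
    | add x y hx hy => simp_all
  rw [h]
  exact S.mulMap_bij.comp ((LinearMap.convTwist_bijective
    (AlgHom.isUnit_toConv_comp_antipode _)).comp (TensorProduct.comm k A H).bijective)

noncomputable def tensorProductEquiv (hφ : ∀ a : A, φ (S.ιA a) = a) : A ⊗[k] H ≃ₐ[k] B :=
  AlgEquiv.ofBijective _ (bijective_lift_ιA_zetaAlgHom S φ hφ)

lemma tensorProductEquiv_tmul (hφ : ∀ a : A, φ (S.ιA a) = a) (a : A) (g : H) :
    tensorProductEquiv S φ hφ (a ⊗ₜ g) = S.ιA a * zeta S φ g :=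
  rfl

end SmashProduct

theorem maximal_abelian_general
    (S : SmashProduct k H A B act) (φ : B →ₐ[k] A)
    (hφ : ∀ a : A, φ (S.ιA a) = a)
    (Hc : Subalgebra k H) (Ac : Subalgebra k A)
    (hHcComm : ∀ x ∈ Hc, ∀ y ∈ Hc, x * y = y * x)
    (hHcMax : ∀ x : H, (∀ y ∈ Hc, x * y = y * x) → x ∈ Hc)
    (hAcComm : ∀ x ∈ Ac, ∀ y ∈ Ac, x * y = y * x)
    (hAcMax : ∀ x : A, (∀ y ∈ Ac, x * y = y * x) → x ∈ Ac) :
    (∀ x ∈ Submodule.span k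
        {b : B | ∃ a ∈ Ac, ∃ g ∈ Hc, b = S.ιA a * zeta S φ g},
      ∀ y ∈ Submodule.span k
        {b : B | ∃ a ∈ Ac, ∃ g ∈ Hc, b = S.ιA a * zeta S φ g},
      x * y = y * x) ∧
    (∀ b : B, (∀ y ∈ Submodule.span k
        {b : B | ∃ a ∈ Ac, ∃ g ∈ Hc, b = S.ιA a * zeta S φ g}, b * y = y * b) →
      b ∈ Submodule.span k
        {b : B | ∃ a ∈ Ac, ∃ g ∈ Hc, b = S.ιA a * zeta S φ g}) := by
  set Y := (Algebra.TensorProduct.map Ac.val Hc.val).range.map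
    (S.tensorProductEquiv φ hφ : A ⊗[k] H →ₐ[k] B)
  have hspan : Submodule.span k {b : B | ∃ a ∈ Ac, ∃ g ∈ Hc, b = S.ιA a * zeta S φ g} =
      Subalgebra.toSubmodule Y := by
    simp only [Y, Algebra.TensorProduct.toSubmodule_map_range_map_val, AlgEquiv.coe_toAlgHom,
      SmashProduct.tensorProductEquiv_tmul]
  have hY : Subalgebra.centralizer k (Y : Set B) = Y := by
    rw [Subalgebra.centralizer_coe_map_algEquiv,
      Algebra.TensorProduct.centralizer_coe_range_map_val,
      (Subalgebra.centralizer_coe_eq_self_iff Ac).2 ⟨hAcComm, hAcMax⟩,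
      (Subalgebra.centralizer_coe_eq_self_iff Hc).2 ⟨hHcComm, hHcMax⟩]
  rw [hspan]
  simpa only [Subalgebra.mem_toSubmodule] using (Subalgebra.centralizer_coe_eq_self_iff Y).1 hY

/-- if `H_c ⊆ H` and `A_c ⊆ A` are maximal abelian subalgebras, then
`A_c · ζ̃(H_c)` is a maximal abelian subalgebra of `A >⋊ H`. -/
theorem maximal_abelian
    (hMA : RightModuleAlgebra k H A act)
    (S : SmashProduct k H A B act) (φ : B →ₐ[k] A)
    (hφ : ∀ a : A, φ (S.ιA a) = a)
    (Hc : Subalgebra k H) (Ac : Subalgebra k A)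
    (hHcComm : ∀ x ∈ Hc, ∀ y ∈ Hc, x * y = y * x)
    (hHcMax : ∀ x : H, (∀ y ∈ Hc, x * y = y * x) → x ∈ Hc)
    (hAcComm : ∀ x ∈ Ac, ∀ y ∈ Ac, x * y = y * x)
    (hAcMax : ∀ x : A, (∀ y ∈ Ac, x * y = y * x) → x ∈ Ac) :
    (∀ x ∈ Submodule.span k
        {b : B | ∃ a ∈ Ac, ∃ g ∈ Hc, b = S.ιA a * zeta S φ g},
      ∀ y ∈ Submodule.span k
        {b : B | ∃ a ∈ Ac, ∃ g ∈ Hc, b = S.ιA a * zeta S φ g},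
      x * y = y * x) ∧
    (∀ b : B, (∀ y ∈ Submodule.span k
        {b : B | ∃ a ∈ Ac, ∃ g ∈ Hc, b = S.ιA a * zeta S φ g}, b * y = y * b) →
      b ∈ Submodule.span k
        {b : B | ∃ a ∈ Ac, ∃ g ∈ Hc, b = S.ιA a * zeta S φ g}) :=
  maximal_abelian_general S φ hφ Hc Ac hHcComm hHcMax hAcComm hAcMax
end

section
/- Let ζ̃ : H → A >⋊ H be the decoupling map ζ̃(g) = g₍₁₎ φ̃(S g₍₂₎) associated to an algebra map φ̃ : A >⋊ H → A fixing A. Then the linear map Θ : H ⊗ A → A >⋊ H defined by Θ(g ⊗ a) = ζ̃(g) a is bijective, with inverse determined by g a ↦ g₍₁₎ ⊗ φ̃(g₍₂₎) a. -/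
open TensorProduct

variable {k : Type} [Field k] {H A B : Type} [Ring H] [Ring A] [Ring B]
  [HopfAlgebra k H] [Algebra k A] [Algebra k B] {act : A →ₗ[k] H →ₗ[k] A}

/-!
Put `ψ = φ̃ ∘ ι_H : H → A`, an algebra map. Then `Θ` is the multiplication isomorphism
`H ⊗ A ≅ A >⋊ H` precomposed with the twist `g ⊗ a ↦ g₍₁₎ ⊗ ψ(S g₍₂₎) a`. Twisting turns the
convolution product of `Hom(H, A)` into composition, and `ψ ∘ S` is the convolution inverse of
`ψ`, so this twist is invertible with inverse the twist by `ψ`.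
-/

open WithConv
open Coalgebra (comul Repr sum_tmul_tmul_eq sum_tmul_counit_eq)
open scoped Coalgebra

section Twist

variable {R C A : Type*} [CommSemiring R] [AddCommMonoid C] [Module R C] [Coalgebra R C]
  [Semiring A] [Algebra R A]

noncomputable def comulTwist (f : C →ₗ[R] A) : Module.End R (C ⊗[R] A) :=
  LinearMap.lTensor C (LinearMap.mul' R A) ∘ₗ (TensorProduct.assoc R C A A).toLinearMap ∘ₗ
    LinearMap.rTensor A (LinearMap.lTensor C f ∘ₗ comul)

lemma comulTwist_tmul (f : C →ₗ[R] A) {c : C} {ι : Type*} (r : Repr R c ι) (a : A) :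
    comulTwist f (c ⊗ₜ a) = ∑ i ∈ r.index, r.left i ⊗ₜ[R] (f (r.right i) * a) := by
  simp [comulTwist, ← r.eq, map_sum, TensorProduct.sum_tmul]

lemma comulTwist_mul (f g : WithConv (C →ₗ[R] A)) :
    comulTwist (f * g).ofConv = comulTwist f.ofConv * comulTwist g.ofConv := by
  refine TensorProduct.ext' fun c a => ?_
  set r := ℛ R c
  set r₁ := fun i => ℛ R (r.left i)
  set r₂ := fun i => ℛ R (r.right i)
  have coassoc := congrArg (LinearMap.lTensor C ((LinearMap.mulRight R a) ∘ₗ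
      LinearMap.mul' R A ∘ₗ TensorProduct.map f.ofConv g.ofConv)) (sum_tmul_tmul_eq r r₁ r₂)
  simp only [map_sum, LinearMap.lTensor_tmul, LinearMap.comp_apply, TensorProduct.map_tmul,
    LinearMap.mul'_apply, LinearMap.mulRight_apply] at coassoc
  calc comulTwist (f * g).ofConv (c ⊗ₜ a)
      = ∑ i ∈ r.index, ∑ j ∈ (r₂ i).index,
          r.left i ⊗ₜ[R] (f ((r₂ i).left j) * g ((r₂ i).right j) * a) := by
        simp only [comulTwist_tmul _ r, (r₂ _).convMul_apply, Finset.sum_mul,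
          TensorProduct.tmul_sum]
    _ = ∑ i ∈ r.index, ∑ j ∈ (r₁ i).index,
          (r₁ i).left j ⊗ₜ[R] (f ((r₁ i).right j) * (g (r.right i) * a)) := by
        simpa only [mul_assoc] using coassoc.symm
    _ = (comulTwist f.ofConv * comulTwist g.ofConv) (c ⊗ₜ a) := by
        simp only [Module.End.mul_apply, comulTwist_tmul _ r, map_sum, comulTwist_tmul _ (r₁ _)]

lemma comulTwist_one : comulTwist (1 : WithConv (C →ₗ[R] A)).ofConv = 1 := by
  refine TensorProduct.ext' fun c a => ?_
  set r := ℛ R c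
  have counit := congrArg (LinearMap.lTensor C (LinearMap.toSpanSingleton R A a))
    (sum_tmul_counit_eq r)
  simp only [map_sum, LinearMap.lTensor_tmul, LinearMap.toSpanSingleton_apply, one_smul]
    at counit
  simpa [comulTwist_tmul _ r, Algebra.smul_def] using counit

lemma comulTwist_tmul_eq_map_comul (f : C →ₗ[R] A) (c : C) (a : A) :
    comulTwist f (c ⊗ₜ a) =
      TensorProduct.map LinearMap.id (LinearMap.mulRight R a ∘ₗ f) (comul c) := by
  rw [comulTwist_tmul _ (ℛ R c), ← (ℛ R c).eq]
  simp [map_sum]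

noncomputable def comulTwistHom : WithConv (C →ₗ[R] A) →* Module.End R (C ⊗[R] A) where
  toFun f := comulTwist f.ofConv
  map_one' := comulTwist_one
  map_mul' := comulTwist_mul

lemma comulTwist_bijective_of_isUnit {f : C →ₗ[R] A} (hf : IsUnit (toConv f)) :
    Function.Bijective (comulTwist f) :=
  Module.End.isUnit_iff _ |>.mp (hf.map comulTwistHom)

lemma mul'_comp_map_comp_comulTwist {B : Type*} [Semiring B] [Algebra R B]
    (i : C →ₗ[R] B) (j : A →ₐ[R] B) (f : C →ₗ[R] A) :
    LinearMap.mul' R B ∘ₗ TensorProduct.map i j.toLinearMap ∘ₗ comulTwist f =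
      LinearMap.mul' R B ∘ₗ
        TensorProduct.map (toConv i * toConv (j.toLinearMap ∘ₗ f)).ofConv j.toLinearMap := by
  refine TensorProduct.ext' fun c a => ?_
  simp [comulTwist_tmul _ (ℛ R c), (ℛ R c).convMul_apply, Finset.sum_mul, mul_assoc]

lemma AlgHom.comp_convOne {B : Type*} [Semiring B] [Algebra R B] (ψ : A →ₐ[R] B) :
    ψ.toLinearMap ∘ₗ (1 : WithConv (C →ₗ[R] A)).ofConv = (1 : WithConv (C →ₗ[R] B)).ofConv := by
  ext; simp

end Twist

section HopfAlgebra

variable {R H A : Type*} [CommSemiring R] [Semiring H] [HopfAlgebra R H]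
  [Semiring A] [Algebra R A]

lemma AlgHom.comp_antipode_convMul (ψ : H →ₐ[R] A) :
    toConv (ψ.toLinearMap ∘ₗ HopfAlgebra.antipode R) * toConv ψ.toLinearMap = 1 := by
  have := LinearMap.algHom_comp_convMul_distrib ψ (toConv (HopfAlgebra.antipode R))
    (toConv LinearMap.id)
  rw [LinearMap.antipode_mul_id, ψ.comp_convOne, LinearMap.comp_id] at this
  exact WithConv.ofConv_injective this.symm

lemma AlgHom.convMul_comp_antipode (ψ : H →ₐ[R] A) :
    toConv ψ.toLinearMap * toConv (ψ.toLinearMap ∘ₗ HopfAlgebra.antipode R) = 1 := by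
  have := LinearMap.algHom_comp_convMul_distrib ψ (toConv LinearMap.id)
    (toConv (HopfAlgebra.antipode R))
  rw [LinearMap.id_mul_antipode, ψ.comp_convOne, LinearMap.comp_id] at this
  exact WithConv.ofConv_injective this.symm

end HopfAlgebra

theorem theta_bijective_general
    (S : SmashProduct k H A B act) (φ : B →ₐ[k] A) :
    Function.Bijective (fun x : H ⊗[k] A =>
      LinearMap.mul' k B (TensorProduct.map (zeta S φ) S.ιA.toLinearMap x)) ∧
    ∀ (g : H) (a : A),
      LinearMap.mul' k B (TensorProduct.map (zeta S φ) S.ιA.toLinearMap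
        (TensorProduct.map LinearMap.id
          ((LinearMap.mulRight k a) ∘ₗ φ.toLinearMap ∘ₗ S.ιH.toLinearMap)
          (Coalgebra.comul g))) = S.ιH g * S.ιA a := by
  set ψ : H →ₐ[k] A := φ.comp S.ιH
  -- `zeta S φ` is, by definition, the convolution product of `ι_H` and `ι_A ∘ ψ ∘ S`.
  have hΘ : LinearMap.mul' k B ∘ₗ TensorProduct.map (zeta S φ) S.ιA.toLinearMap =
      LinearMap.mul' k B ∘ₗ TensorProduct.map S.ιH.toLinearMap S.ιA.toLinearMap ∘ₗ
        comulTwist (ψ.toLinearMap ∘ₗ HopfAlgebra.antipode k) :=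
    (mul'_comp_map_comp_comulTwist _ _ _).symm
  have hinv : comulTwist (ψ.toLinearMap ∘ₗ HopfAlgebra.antipode k) *
      comulTwist ψ.toLinearMap = 1 := by
    rw [← comulTwist_mul, ψ.comp_antipode_convMul, comulTwist_one]
  have hunit : IsUnit (toConv (ψ.toLinearMap ∘ₗ HopfAlgebra.antipode k)) :=
    isUnit_iff_exists.mpr ⟨_, ψ.comp_antipode_convMul, ψ.convMul_comp_antipode⟩
  refine ⟨?_, fun g a => ?_⟩
  · change Function.Bijective (LinearMap.mul' k B ∘ₗ _)
    rw [hΘ]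
    exact S.mulMap_bij.comp (comulTwist_bijective_of_isUnit hunit)
  · have hψ : TensorProduct.map LinearMap.id ((LinearMap.mulRight k a) ∘ₗ φ.toLinearMap ∘ₗ
        S.ιH.toLinearMap) (Coalgebra.comul g) = comulTwist ψ.toLinearMap (g ⊗ₜ a) :=
      (comulTwist_tmul_eq_map_comul _ g a).symm
    rw [hψ, ← LinearMap.comp_apply (M₃ := B), hΘ, LinearMap.comp_apply, LinearMap.comp_apply,
      ← Module.End.mul_apply, hinv]
    simp

/-- `Θ : H ⊗ A → A >⋊ H`, `g ⊗ a ↦ ζ̃(g) a`, is bijective, with inverse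
determined by `g a ↦ g₍₁₎ ⊗ φ̃(g₍₂₎) a`. -/
theorem theta_bijective
    (hMA : RightModuleAlgebra k H A act)
    (S : SmashProduct k H A B act) (φ : B →ₐ[k] A)
    (hφ : ∀ a : A, φ (S.ιA a) = a) :
    Function.Bijective (fun x : H ⊗[k] A =>
      LinearMap.mul' k B (TensorProduct.map (zeta S φ) S.ιA.toLinearMap x)) ∧
    ∀ (g : H) (a : A),
      LinearMap.mul' k B (TensorProduct.map (zeta S φ) S.ιA.toLinearMap
        (TensorProduct.map LinearMap.id
          ((LinearMap.mulRight k a) ∘ₗ φ.toLinearMap ∘ₗ S.ιH.toLinearMap)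
          (Coalgebra.comul g))) = S.ιH g * S.ιA a :=
  theta_bijective_general S φ
end
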